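/- arXiv:2401.14323 — 2 statements merged into one kernel-verified Lean document; each statement's English description precedes it below -/
import Mathlib

section
/- Corollary 2: Suppose there exists s′ ∈ S such that for every s ∈ S the chain X–Y_s–Y_{s′} is Markov, i.e., there is a channel W_s from 𝒴 to 𝒴 with P_{XY_{s′}}(x,y′) = Σ_y P_{XY_s}(x,y)·W_s(y′|y) for all x, y′. Then the lower-bound and upper-bound expressions of Theorem 1 are equal: L(R) = M(R) for every R > 0. -/
/-!
For every test channel `U – X – Y_s` the degradedness hypothesis extends the chain to
`U – X – Y_s – Y_{s'}`, so the data-processing inequality (a consequence of the log-sum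
inequality) gives `I(U;Y_{s'}) ≤ I(U;Y_s)`. Hence the minimum over `s` in the constraint of `L(R)`
is always attained at `s'`, so `L(R)` is the single-state supremum at `s'`; and the same inequality
makes the constraint at `s'` the most restrictive one, so that supremum is also the minimum over
`s` defining `M(R)`.
-/

open scoped BigOperators Classical

noncomputable section

namespace CRGen

/-- A probability mass function on a finite type. -/
def IsPMF {α : Type*} [Fintype α] (p : α → ℝ) : Prop :=
  (∀ a, 0 ≤ p a) ∧ ∑ a, p a = 1

/-- Shannon entropy to base 2 of a pmf on a finite type (`0 log 0 = 0`). -/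
def entPMF {α : Type*} [Fintype α] (p : α → ℝ) : ℝ :=
  - ∑ a, p a * Real.logb 2 (p a)

/-- Distribution (pushforward pmf) of a random variable on a finite probability
space with pmf `μ`. -/
def dist {Ω α : Type*} [Fintype Ω] (μ : Ω → ℝ) (X : Ω → α) : α → ℝ :=
  fun a => ∑ ω, if X ω = a then μ ω else 0

/-- Shannon entropy (base 2) of a random variable. -/
def H {Ω α : Type*} [Fintype Ω] [Fintype α] (μ : Ω → ℝ) (X : Ω → α) : ℝ :=
  entPMF (dist μ X)

/-- Conditional entropy `H(X|Y)`. -/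
def condH {Ω α β : Type*} [Fintype Ω] [Fintype α] [Fintype β]
    (μ : Ω → ℝ) (X : Ω → α) (Y : Ω → β) : ℝ :=
  H μ (fun ω => (X ω, Y ω)) - H μ Y

/-- Mutual information `I(X;Y)`. -/
def MI {Ω α β : Type*} [Fintype Ω] [Fintype α] [Fintype β]
    (μ : Ω → ℝ) (X : Ω → α) (Y : Ω → β) : ℝ :=
  H μ X + H μ Y - H μ (fun ω => (X ω, Y ω))

/-- Conditional mutual information `I(X;Y|Z)`. -/
def condMI {Ω α β γ : Type*} [Fintype Ω] [Fintype α] [Fintype β] [Fintype γ]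
    (μ : Ω → ℝ) (X : Ω → α) (Y : Ω → β) (Z : Ω → γ) : ℝ :=
  H μ (fun ω => (X ω, Z ω)) + H μ (fun ω => (Y ω, Z ω))
    - H μ (fun ω => (X ω, (Y ω, Z ω))) - H μ Z

/-- First marginal of a joint pmf on a product. -/
def margFst {α β : Type*} [Fintype α] [Fintype β] (q : α × β → ℝ) : α → ℝ :=
  fun a => ∑ b, q (a, b)

/-- Second marginal of a joint pmf on a product. -/
def margSnd {α β : Type*} [Fintype α] [Fintype β] (q : α × β → ℝ) : β → ℝ :=
  fun b => ∑ a, q (a, b)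

/-- Mutual information of a joint pmf on a product. -/
def miPMF {α β : Type*} [Fintype α] [Fintype β] (q : α × β → ℝ) : ℝ :=
  entPMF (margFst q) + entPMF (margSnd q) - entPMF q

/-- The lower-bound expression `L(R)` of Theorem 1: the supremum of `I(U;X)` over
all finite sets `𝒰` and channels `W = P_{U|X}` from `𝒳` to `𝒰` such that for
every `s ∈ S` the triple `(U, X, Y_s)` has joint law `P_{U|X}·P_{XY_s}` and
`I(U;X) − min_{s∈S} I(U;Y_s) ≤ R`. -/
def LB {S 𝒳 𝒴 : Type} [Fintype S] [Fintype 𝒳] [Fintype 𝒴] [Nonempty S]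
    (P : S → 𝒳 × 𝒴 → ℝ) (PX : 𝒳 → ℝ) (R : ℝ) : ℝ :=
  sSup { r : ℝ | ∃ (𝒰 : Type) (_ : Fintype 𝒰) (W : 𝒳 → 𝒰 → ℝ),
    (∀ x u, 0 ≤ W x u) ∧ (∀ x, ∑ u, W x u = 1) ∧
    miPMF (fun p : 𝒰 × 𝒳 => W p.2 p.1 * PX p.2)
      - Finset.univ.inf' Finset.univ_nonempty
          (fun s : S => miPMF (fun p : 𝒰 × 𝒴 => ∑ x, W x p.1 * P s (x, p.2))) ≤ R ∧
    r = miPMF (fun p : 𝒰 × 𝒳 => W p.2 p.1 * PX p.2) }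

/-- For a single source state with joint pmf `Q` on `𝒳 × 𝒴` (with `𝒳`-marginal
`PX`): the supremum of `I(U;X)` over all finite sets `𝒰` and channels
`W = P_{U|X}` such that `(U,X,Y)` has joint law `P_{U|X}·Q` and
`I(U;X) − I(U;Y) ≤ R`. -/
def Msup {𝒳 𝒴 : Type} [Fintype 𝒳] [Fintype 𝒴]
    (Q : 𝒳 × 𝒴 → ℝ) (PX : 𝒳 → ℝ) (R : ℝ) : ℝ :=
  sSup { r : ℝ | ∃ (𝒰 : Type) (_ : Fintype 𝒰) (W : 𝒳 → 𝒰 → ℝ),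
    (∀ x u, 0 ≤ W x u) ∧ (∀ x, ∑ u, W x u = 1) ∧
    miPMF (fun p : 𝒰 × 𝒳 => W p.2 p.1 * PX p.2)
      - miPMF (fun p : 𝒰 × 𝒴 => ∑ x, W x p.1 * Q (x, p.2)) ≤ R ∧
    r = miPMF (fun p : 𝒰 × 𝒳 => W p.2 p.1 * PX p.2) }

/-- The upper-bound expression `M(R)` of Theorem 1:
`min_{s ∈ S}` of the per-state supremum. -/
def MB {S 𝒳 𝒴 : Type} [Fintype S] [Fintype 𝒳] [Fintype 𝒴] [Nonempty S]
    (P : S → 𝒳 × 𝒴 → ℝ) (PX : 𝒳 → ℝ) (R : ℝ) : ℝ :=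
  Finset.univ.inf' Finset.univ_nonempty fun s : S => Msup (P s) PX R

lemma convexOn_mul_logb : ConvexOn ℝ (Set.Ici 0) fun x : ℝ => x * Real.logb 2 x := by
  refine (Real.convexOn_mul_log.smul (c := (Real.log 2)⁻¹) (by positivity)).congr fun x _ => ?_
  simp only [smul_eq_mul, Real.logb]
  ring

/-- The log-sum inequality, with the conventions `0 / 0 = 0` and `logb 0 = 0`. -/
theorem sum_mul_logb_div_sum_le {ι : Type*} [Fintype ι] (a b : ι → ℝ) (ha : ∀ i, 0 ≤ a i)
    (hb : ∀ i, 0 ≤ b i) (hab : ∀ i, b i = 0 → a i = 0) :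
    (∑ i, a i) * Real.logb 2 ((∑ i, a i) / ∑ i, b i)
      ≤ ∑ i, a i * Real.logb 2 (a i / b i) := by
  set A := ∑ i, a i
  set B := ∑ i, b i
  have hcancel : ∀ i, b i * (a i / b i) = a i := fun i => mul_div_cancel_of_imp' (hab i)
  obtain hB | hB : 0 = B ∨ 0 < B := (Finset.sum_nonneg fun i _ => hb i).eq_or_lt
  · have ha0 : ∀ i, a i = 0 := fun i =>
      hab i ((Finset.sum_eq_zero_iff_of_nonneg fun i _ => hb i).1 hB.symm i (Finset.mem_univ i))
    simp [A, ha0]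
  -- Jensen for `x ↦ x logb x` at the points `a i / b i` with weights `b i / B`
  have hjensen := convexOn_mul_logb.map_sum_le (t := Finset.univ) (w := fun i => b i / B)
    (p := fun i => a i / b i) (fun i _ => div_nonneg (hb i) hB.le)
    (by rw [← Finset.sum_div, div_self hB.ne']) (fun i _ => div_nonneg (ha i) (hb i))
  have hweight : ∀ i (c : ℝ), (b i / B) • (a i / b i * c) = a i * c / B := fun i c => by
    rw [smul_eq_mul]
    linear_combination (c / B) * hcancel i
  have hmean : ∑ i, (b i / B) • (a i / b i) = A / B := by
    rw [Finset.sum_div]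
    exact Finset.sum_congr rfl fun i _ => by simpa using hweight i 1
  rw [hmean, Finset.sum_congr rfl fun i _ => hweight i _, ← Finset.sum_div] at hjensen
  calc A * Real.logb 2 (A / B) = B * (A / B * Real.logb 2 (A / B)) := by field_simp
    _ ≤ B * ((∑ i, a i * Real.logb 2 (a i / b i)) / B) := by gcongr
    _ = ∑ i, a i * Real.logb 2 (a i / b i) := by field_simp


section Marginals

variable {α β γ : Type*} [Fintype α] [Fintype β] [Fintype γ]

lemma le_margFst {q : α × β → ℝ} (hq : ∀ p, 0 ≤ q p) (a : α) (b : β) : q (a, b) ≤ margFst q a :=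
  Finset.single_le_sum (fun i _ => hq (a, i)) (Finset.mem_univ b)

lemma le_margSnd {q : α × β → ℝ} (hq : ∀ p, 0 ≤ q p) (a : α) (b : β) : q (a, b) ≤ margSnd q b :=
  Finset.single_le_sum (fun i _ => hq (i, b)) (Finset.mem_univ a)

lemma margFst_nonneg {q : α × β → ℝ} (hq : ∀ p, 0 ≤ q p) (a : α) : 0 ≤ margFst q a :=
  Finset.sum_nonneg fun b _ => hq (a, b)

lemma margSnd_nonneg {q : α × β → ℝ} (hq : ∀ p, 0 ≤ q p) (b : β) : 0 ≤ margSnd q b :=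
  Finset.sum_nonneg fun a _ => hq (a, b)

lemma sum_margFst_mul (q : α × β → ℝ) (g : α → ℝ) :
    ∑ a, margFst q a * g a = ∑ p : α × β, q p * g p.1 := by
  rw [Fintype.sum_prod_type]
  exact Finset.sum_congr rfl fun a _ => Finset.sum_mul ..

lemma sum_margSnd_mul (q : α × β → ℝ) (g : β → ℝ) :
    ∑ b, margSnd q b * g b = ∑ p : α × β, q p * g p.2 := by
  rw [Fintype.sum_prod_type_right]
  exact Finset.sum_congr rfl fun b _ => Finset.sum_mul ..

lemma eq_zero_of_margFst_mul_margSnd_eq_zero {q : α × β → ℝ} (hq : ∀ p, 0 ≤ q p) {a : α} {b : β}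
    (h : margFst q a * margSnd q b = 0) : q (a, b) = 0 := by
  rcases mul_eq_zero.1 h with h | h
  · exact le_antisymm (h ▸ le_margFst hq a b) (hq _)
  · exact le_antisymm (h ▸ le_margSnd hq a b) (hq _)

lemma miPMF_eq_sum_mul_logb_div {q : α × β → ℝ} (hq : ∀ p, 0 ≤ q p) :
    miPMF q = ∑ p : α × β, q p * Real.logb 2 (q p / (margFst q p.1 * margSnd q p.2)) := by
  have hterm : ∀ p : α × β, q p * Real.logb 2 (q p / (margFst q p.1 * margSnd q p.2))
      = q p * Real.logb 2 (q p) - q p * Real.logb 2 (margFst q p.1)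
          - q p * Real.logb 2 (margSnd q p.2) := by
    intro p
    rcases (hq p).eq_or_lt with h | h
    · simp [← h]
    have hfst : 0 < margFst q p.1 := h.trans_le (le_margFst hq p.1 p.2)
    have hsnd : 0 < margSnd q p.2 := h.trans_le (le_margSnd hq p.1 p.2)
    rw [Real.logb_div h.ne' (mul_pos hfst hsnd).ne', Real.logb_mul hfst.ne' hsnd.ne']
    ring
  unfold miPMF entPMF
  rw [sum_margFst_mul, sum_margSnd_mul, Finset.sum_congr rfl fun p _ => hterm p,
    Finset.sum_sub_distrib, Finset.sum_sub_distrib]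
  ring

lemma entPMF_margFst_le {q : α × β → ℝ} (hq : ∀ p, 0 ≤ q p) :
    entPMF (margFst q) ≤ entPMF q := by
  unfold entPMF
  rw [neg_le_neg_iff, sum_margFst_mul]
  refine Finset.sum_le_sum fun p _ => ?_
  rcases (hq p).eq_or_lt with h | h
  · simp [← h]
  · exact mul_le_mul_of_nonneg_left
      (Real.logb_le_logb_of_le one_lt_two h (le_margFst hq p.1 p.2)) (hq p)

lemma miPMF_le_entPMF_margSnd {q : α × β → ℝ} (hq : ∀ p, 0 ≤ q p) :
    miPMF q ≤ entPMF (margSnd q) := by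
  have := entPMF_margFst_le hq
  unfold miPMF
  linarith

lemma miPMF_const_fst (f : γ → ℝ) (hf : ∑ c, f c = 1) :
    miPMF (fun p : PUnit × γ => f p.2) = 0 := by
  simp [miPMF, entPMF, margFst, margSnd, hf, Fintype.sum_prod_type]

end Marginals

section Channel

variable {α β γ : Type*} [Fintype β]

/-- The joint law of `(A, C)` when `(A, B) ∼ q` and `C` is the output of the channel `K` on input
`B`, i.e. `A – B – C` is a Markov chain. -/
def channelSnd (q : α × β → ℝ) (K : β → γ → ℝ) : α × γ → ℝ :=
  fun p => ∑ b, q (p.1, b) * K b p.2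

variable {q : α × β → ℝ} {K : β → γ → ℝ}

lemma channelSnd_nonneg (hq : ∀ p, 0 ≤ q p) (hK : ∀ b c, 0 ≤ K b c) (p : α × γ) :
    0 ≤ channelSnd q K p :=
  Finset.sum_nonneg fun _ _ => mul_nonneg (hq _) (hK _ _)

variable [Fintype α] [Fintype γ]

lemma margFst_channelSnd (hK : ∀ b, ∑ c, K b c = 1) : margFst (channelSnd q K) = margFst q := by
  funext a
  simp only [margFst, channelSnd]
  rw [Finset.sum_comm]
  simp [← Finset.mul_sum, hK]

lemma margSnd_channelSnd (c : γ) : margSnd (channelSnd q K) c = ∑ b, margSnd q b * K b c := by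
  simp only [margSnd, channelSnd, Finset.sum_mul]
  exact Finset.sum_comm

/-- The log-sum inequality applied to the fibre of the channel output over `(a, c)`. -/
lemma channelSnd_mul_logb_le (hq : ∀ p, 0 ≤ q p) (hK : ∀ b c, 0 ≤ K b c) (a : α) (c : γ) :
    channelSnd q K (a, c) *
        Real.logb 2 (channelSnd q K (a, c) / (margFst q a * margSnd (channelSnd q K) c))
      ≤ ∑ b, K b c * (q (a, b) * Real.logb 2 (q (a, b) / (margFst q a * margSnd q b))) := by
  have hlogsum := sum_mul_logb_div_sum_le (fun b => q (a, b) * K b c)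
    (fun b => margFst q a * margSnd q b * K b c) (fun b => mul_nonneg (hq _) (hK _ _))
    (fun b => mul_nonneg (mul_nonneg (margFst_nonneg hq a) (margSnd_nonneg hq b)) (hK _ _))
    (fun b hb => by
      rcases mul_eq_zero.1 hb with h | h
      · rw [eq_zero_of_margFst_mul_margSnd_eq_zero hq h, zero_mul]
      · rw [h, mul_zero])
  rw [margSnd_channelSnd, Finset.mul_sum]
  simp only [mul_assoc] at hlogsum
  refine hlogsum.trans_eq (Finset.sum_congr rfl fun b _ => ?_)
  rcases (hK b c).eq_or_lt with h | h
  · simp [← h]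
  · rw [← mul_assoc, ← mul_assoc, mul_div_mul_right _ _ h.ne']
    ring

/-- The data-processing inequality `I(A;C) ≤ I(A;B)` for a Markov chain `A – B – C`. -/
theorem miPMF_channelSnd_le (hq : ∀ p, 0 ≤ q p) (hK : ∀ b c, 0 ≤ K b c)
    (hK1 : ∀ b, ∑ c, K b c = 1) : miPMF (channelSnd q K) ≤ miPMF q := by
  rw [miPMF_eq_sum_mul_logb_div hq, miPMF_eq_sum_mul_logb_div (channelSnd_nonneg hq hK),
    margFst_channelSnd hK1, Fintype.sum_prod_type, Fintype.sum_prod_type]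
  refine Finset.sum_le_sum fun a _ => ?_
  calc _ ≤ ∑ c, ∑ b, K b c * (q (a, b) * Real.logb 2 (q (a, b) / (margFst q a * margSnd q b))) :=
        Finset.sum_le_sum fun c _ => channelSnd_mul_logb_le hq hK a c
    _ = _ := by
        rw [Finset.sum_comm]
        simp [← Finset.sum_mul, hK1]

end Channel

lemma inf'_univ_eq_of_forall_le {ι α : Type*} [Fintype ι] [Nonempty ι] [SemilatticeInf α]
    (f : ι → α) (i : ι) (h : ∀ j, f i ≤ f j) : Finset.univ.inf' Finset.univ_nonempty f = f i :=
  le_antisymm (Finset.inf'_le _ (Finset.mem_univ i)) (Finset.le_inf' _ _ fun j _ => h j)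

section Rates

variable {𝒳 𝒴 𝒰 : Type} [Fintype 𝒳] [Fintype 𝒴]

def jointUX (W : 𝒳 → 𝒰 → ℝ) (PX : 𝒳 → ℝ) : 𝒰 × 𝒳 → ℝ :=
  fun p => W p.2 p.1 * PX p.2

def jointUY (W : 𝒳 → 𝒰 → ℝ) (Q : 𝒳 × 𝒴 → ℝ) : 𝒰 × 𝒴 → ℝ :=
  fun p => ∑ x, W x p.1 * Q (x, p.2)

/-- The set whose supremum is `Msup Q PX R`. -/
def msupRates (Q : 𝒳 × 𝒴 → ℝ) (PX : 𝒳 → ℝ) (R : ℝ) : Set ℝ :=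
  { r : ℝ | ∃ (𝒰 : Type) (_ : Fintype 𝒰) (W : 𝒳 → 𝒰 → ℝ),
    (∀ x u, 0 ≤ W x u) ∧ (∀ x, ∑ u, W x u = 1) ∧
    miPMF (jointUX W PX) - miPMF (jointUY W Q) ≤ R ∧ r = miPMF (jointUX W PX) }

lemma jointUY_channelSnd (W : 𝒳 → 𝒰 → ℝ) (Q : 𝒳 × 𝒴 → ℝ) (K : 𝒴 → 𝒴 → ℝ) :
    jointUY W (channelSnd Q K) = channelSnd (jointUY W Q) K := by
  funext p
  simp only [jointUY, channelSnd, Finset.mul_sum, Finset.sum_mul, mul_assoc]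
  exact Finset.sum_comm

lemma miPMF_jointUY_le_of_degraded [Fintype 𝒰] {Q Q' : 𝒳 × 𝒴 → ℝ} {W : 𝒳 → 𝒰 → ℝ} {K : 𝒴 → 𝒴 → ℝ}
    (hQ : ∀ p, 0 ≤ Q p) (hW : ∀ x u, 0 ≤ W x u) (hK : ∀ y y', 0 ≤ K y y')
    (hK1 : ∀ y, ∑ y', K y y' = 1) (hQ' : ∀ x y', Q' (x, y') = ∑ y, Q (x, y) * K y y') :
    miPMF (jointUY W Q') ≤ miPMF (jointUY W Q) := by
  obtain rfl : Q' = channelSnd Q K := funext fun p => hQ' p.1 p.2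
  rw [jointUY_channelSnd]
  exact miPMF_channelSnd_le
    (fun p => Finset.sum_nonneg fun x _ => mul_nonneg (hW _ _) (hQ _)) hK hK1

lemma miPMF_jointUX_le_entPMF [Fintype 𝒰] {PX : 𝒳 → ℝ} (hPX : ∀ x, 0 ≤ PX x) {W : 𝒳 → 𝒰 → ℝ}
    (hW : ∀ x u, 0 ≤ W x u) (hW1 : ∀ x, ∑ u, W x u = 1) : miPMF (jointUX W PX) ≤ entPMF PX := by
  have hsnd : margSnd (jointUX W PX) = PX := by
    funext x
    simp [margSnd, jointUX, ← Finset.sum_mul, hW1]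
  calc miPMF (jointUX W PX) ≤ entPMF (margSnd (jointUX W PX)) :=
        miPMF_le_entPMF_margSnd fun p => mul_nonneg (hW p.2 p.1) (hPX p.2)
    _ = entPMF PX := by rw [hsnd]

variable {PX : 𝒳 → ℝ} {R : ℝ}

lemma bddAbove_msupRates (Q : 𝒳 × 𝒴 → ℝ) (hPX : ∀ x, 0 ≤ PX x) :
    BddAbove (msupRates Q PX R) := by
  refine ⟨entPMF PX, ?_⟩
  rintro r ⟨𝒰, _, W, hW, hW1, -, rfl⟩
  exact miPMF_jointUX_le_entPMF hPX hW hW1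

/-- A constant `U` is always admissible. -/
lemma zero_mem_msupRates {Q : 𝒳 × 𝒴 → ℝ} (hPX : ∑ x, PX x = 1) (hQ : ∑ p, Q p = 1)
    (hR : 0 ≤ R) : 0 ∈ msupRates Q PX R := by
  have hY : ∑ y, margSnd Q y = 1 := by rw [← hQ, Fintype.sum_prod_type_right]; rfl
  have hUX : miPMF (jointUX (fun _ _ => 1) PX : PUnit × 𝒳 → ℝ) = 0 := by
    rw [show jointUX _ PX = fun p : PUnit × 𝒳 => PX p.2 from funext fun _ => one_mul _]
    exact miPMF_const_fst PX hPX
  have hUY : miPMF (jointUY (fun _ _ => 1) Q : PUnit × 𝒴 → ℝ) = 0 := by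
    rw [show jointUY _ Q = fun p : PUnit × 𝒴 => margSnd Q p.2 by
      funext; simp [jointUY, margSnd]]
    exact miPMF_const_fst (margSnd Q) hY
  exact ⟨PUnit, inferInstance, fun _ _ => 1, fun _ _ => zero_le_one, fun _ => by simp,
    by rw [hUX, hUY, sub_zero]; exact hR, hUX.symm⟩

lemma Msup_mono {Q Q' : 𝒳 × 𝒴 → ℝ} (hPX : IsPMF PX) (hQ' : ∑ p, Q' p = 1) (hR : 0 ≤ R)
    (h : ∀ (𝒰 : Type) [Fintype 𝒰] (W : 𝒳 → 𝒰 → ℝ), (∀ x u, 0 ≤ W x u) →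
      miPMF (jointUY W Q') ≤ miPMF (jointUY W Q)) :
    Msup Q' PX R ≤ Msup Q PX R := by
  refine csSup_le_csSup (bddAbove_msupRates Q hPX.1) ⟨0, zero_mem_msupRates hPX.2 hQ' hR⟩ ?_
  rintro r ⟨𝒰, _, W, hW, hW1, hrate, rfl⟩
  exact ⟨𝒰, _, W, hW, hW1, (sub_le_sub_left (h 𝒰 W hW) _).trans hrate, rfl⟩

end Rates

lemma LB_eq_Msup_of_forall_le {S 𝒳 𝒴 : Type} [Fintype S] [Fintype 𝒳] [Fintype 𝒴] [Nonempty S]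
    (P : S → 𝒳 × 𝒴 → ℝ) (PX : 𝒳 → ℝ) (R : ℝ) (s' : S)
    (h : ∀ (𝒰 : Type) [Fintype 𝒰] (W : 𝒳 → 𝒰 → ℝ), (∀ x u, 0 ≤ W x u) →
      ∀ s, miPMF (jointUY W (P s')) ≤ miPMF (jointUY W (P s))) :
    LB P PX R = Msup (P s') PX R := by
  unfold LB Msup
  congr 1
  ext r
  refine exists_congr fun 𝒰 => exists_congr fun _ => exists_congr fun W => ?_
  constructor
  all_goals
    rintro ⟨hW, hW1, hrate, rfl⟩
    refine ⟨hW, hW1, ?_, rfl⟩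
  · rwa [inf'_univ_eq_of_forall_le _ s' (h 𝒰 W hW)] at hrate
  · rwa [inf'_univ_eq_of_forall_le _ s' (h 𝒰 W hW)]

theorem corollary2_degraded_bounds_equal_general
    {S 𝒳 𝒴 : Type} [Fintype S] [Fintype 𝒳] [Fintype 𝒴] [Nonempty S]
    (P : S → 𝒳 × 𝒴 → ℝ) (PX : 𝒳 → ℝ)
    (hP : ∀ s, IsPMF (P s)) (hPX : IsPMF PX)
    (s' : S)
    (hdeg : ∀ s : S, ∃ W : 𝒴 → 𝒴 → ℝ,
      (∀ y y', 0 ≤ W y y') ∧ (∀ y, ∑ y', W y y' = 1) ∧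
      ∀ x y', P s' (x, y') = ∑ y, P s (x, y) * W y y') :
    ∀ R : ℝ, 0 < R → LB P PX R = MB P PX R := by
  intro R hR
  have hdegraded : ∀ (𝒰 : Type) [Fintype 𝒰] (W : 𝒳 → 𝒰 → ℝ), (∀ x u, 0 ≤ W x u) →
      ∀ s, miPMF (jointUY W (P s')) ≤ miPMF (jointUY W (P s)) := by
    intro 𝒰 _ W hW s
    obtain ⟨K, hK, hK1, hK'⟩ := hdeg s
    exact miPMF_jointUY_le_of_degraded (hP s).1 hW hK hK1 hK'
  have hMsup : ∀ s, Msup (P s') PX R ≤ Msup (P s) PX R := fun s =>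
    Msup_mono hPX (hP s').2 hR.le fun 𝒰 _ W hW => hdegraded 𝒰 W hW s
  rw [LB_eq_Msup_of_forall_le P PX R s' hdegraded, MB,
    inf'_univ_eq_of_forall_le _ s' hMsup]

/-- Corollary 2: if there is `s' ∈ S` such that for every `s ∈ S` the chain
`X – Y_s – Y_{s'}` is Markov (i.e. `P_{XY_{s'}}` is obtained from `P_{XY_s}` by a
channel `W_s` acting on the `𝒴`-component), then the lower- and upper-bound
expressions of Theorem 1 are equal for every `R > 0`. -/
theorem corollary2_degraded_bounds_equal
    {S 𝒳 𝒴 : Type} [Fintype S] [Fintype 𝒳] [Fintype 𝒴] [Nonempty S]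
    (P : S → 𝒳 × 𝒴 → ℝ) (PX : 𝒳 → ℝ)
    (hP : ∀ s, IsPMF (P s)) (hPX : IsPMF PX)
    (hmarg : ∀ s x, ∑ y, P s (x, y) = PX x)
    (s' : S)
    (hdeg : ∀ s : S, ∃ W : 𝒴 → 𝒴 → ℝ,
      (∀ y y', 0 ≤ W y y') ∧ (∀ y, ∑ y', W y y' = 1) ∧
      ∀ x y', P s' (x, y') = ∑ y, P s (x, y) * W y y') :
    ∀ R : ℝ, 0 < R → LB P PX R = MB P PX R :=
  corollary2_degraded_bounds_equal_general P PX hP hPX s' hdeg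

end CRGen
end
end

section
/- Single-letterization of the entropy of a function of the source: Let X^n = (X₁,…,X_n) and Y^n = (Y₁,…,Y_n) be finite-valued sequences, let K = Φ(X^n) for a function Φ, let J be uniformly distributed on {1,…,n} and independent of (X^n, Y^n), and set U = (K, X₁,…,X_{J−1}, Y_{J+1},…,Y_n, J). Then H(K) ≤ n·I(U;X_J). -/
/-
Since `K` is a function of `X^n`, the conditional entropies `H(K | X₁,…,X_m)` decrease from
`H(K)` at `m = 0` to `0` at `m = n`, and the step from `m = j - 1` to `m = j` is
`I(K; X_j | X^{j-1}) ≤ I(K, X^{j-1}, Y_{j+1}^n; X_j)` by the chain rule for mutual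
information. As `J` is uniform and independent of `(X^n, Y^n)`, the sum of these single-letter
terms is `n · I(U; X_J | J)`, and `I(U; X_J | J) ≤ I(U; X_J)` because `U` contains `J`.
Nonnegativity of conditional mutual information is the Gibbs inequality `log x ≤ x - 1`.
-/

open scoped BigOperators Classical

noncomputable section

namespace CRGen

/-- The (variable-length) prefix `x₁,…,x_{j−1}` of a vector, encoded as a masked
vector: entries at positions `≥ j` are replaced by `none`. -/
def maskPre {𝒳 : Type} {n : ℕ} (xv : Fin n → 𝒳) (j : Fin n) : Fin n → Option 𝒳 :=
  fun i => if (i : ℕ) < (j : ℕ) then some (xv i) else none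

/-- The (variable-length) suffix `y_{j+1},…,y_n` of a vector, encoded as a masked
vector: entries at positions `≤ j` are replaced by `none`. -/
def maskSuf {𝒴 : Type} {n : ℕ} (yv : Fin n → 𝒴) (j : Fin n) : Fin n → Option 𝒴 :=
  fun i => if (j : ℕ) < (i : ℕ) then some (yv i) else none

section Basic

variable {Ω α β γ : Type*} [Fintype Ω]

theorem sum_dist_mul [Fintype α] (μ : Ω → ℝ) (X : Ω → α) (g : α → ℝ) :
    ∑ a, dist μ X a * g a = ∑ ω, μ ω * g (X ω) := by
  simp only [dist, Finset.sum_mul, ite_mul, zero_mul]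
  rw [Finset.sum_comm]
  simp

theorem sum_dist [Fintype α] (μ : Ω → ℝ) (X : Ω → α) : ∑ a, dist μ X a = ∑ ω, μ ω := by
  simpa using sum_dist_mul μ X (fun _ => 1)

theorem dist_nonneg {μ : Ω → ℝ} (hμ : IsPMF μ) (X : Ω → α) (a : α) : 0 ≤ dist μ X a :=
  Finset.sum_nonneg fun ω _ => by split <;> simp [hμ.1 ω]

theorem isPMF_dist [Fintype α] {μ : Ω → ℝ} (hμ : IsPMF μ) (X : Ω → α) : IsPMF (dist μ X) :=
  ⟨dist_nonneg hμ X, by rw [sum_dist, hμ.2]⟩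

theorem le_dist_apply_self {μ : Ω → ℝ} (hμ : IsPMF μ) (X : Ω → α) (ω : Ω) :
    μ ω ≤ dist μ X (X ω) := by
  have := Finset.single_le_sum (f := fun ω' => if X ω' = X ω then μ ω' else 0)
    (fun ω' _ => by split <;> simp [hμ.1 ω']) (Finset.mem_univ ω)
  simpa [dist] using this

theorem dist_apply_self_pos {μ : Ω → ℝ} (hμ : IsPMF μ) (X : Ω → α) {ω : Ω} (h : 0 < μ ω) :
    0 < dist μ X (X ω) :=
  h.trans_le (le_dist_apply_self hμ X ω)

theorem sum_dist_pair_fst [Fintype α] (μ : Ω → ℝ) (X : Ω → α) (Z : Ω → γ) (z : γ) :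
    ∑ x, dist μ (fun ω => (X ω, Z ω)) (x, z) = dist μ Z z := by
  simp only [dist, Prod.ext_iff]
  rw [Finset.sum_comm]
  refine Finset.sum_congr rfl fun ω _ => ?_
  by_cases h : Z ω = z <;> simp [h]

theorem dist_comp [Fintype α] (μ : Ω → ℝ) (T : Ω → α) (f : α → β) (b : β) :
    dist μ (fun ω => f (T ω)) b = dist (dist μ T) f b := by
  have := sum_dist_mul μ T fun a => if f a = b then 1 else 0
  simp only [mul_ite, mul_one, mul_zero] at this
  exact this.symm

theorem entPMF_eq_sum_negMulLog {α : Type*} [Fintype α] (p : α → ℝ) :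
    entPMF p = (∑ a, Real.negMulLog (p a)) / Real.log 2 := by
  simp only [entPMF, Real.negMulLog, Real.logb, Finset.sum_div, ← Finset.sum_neg_distrib]
  congr 1; ext a; ring

theorem H_eq_neg_sum [Fintype α] (μ : Ω → ℝ) (X : Ω → α) :
    H μ X = - ∑ ω, μ ω * Real.logb 2 (dist μ X (X ω)) := by
  rw [H, entPMF, sum_dist_mul μ X fun a => Real.logb 2 (dist μ X a)]

theorem H_comp [Fintype α] [Fintype β] (μ : Ω → ℝ) (T : Ω → α) (f : α → β) :
    H μ (fun ω => f (T ω)) = H (dist μ T) f := by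
  simp only [H]
  congr 1
  ext b
  exact dist_comp μ T f b

theorem H_eq_of_eq_iff [Fintype α] [Fintype β] {μ : Ω → ℝ} {X : Ω → α} {W : Ω → β}
    (h : ∀ ω ω', X ω' = X ω ↔ W ω' = W ω) : H μ X = H μ W := by
  have hdist : ∀ ω, dist μ X (X ω) = dist μ W (W ω) := fun ω =>
    Finset.sum_congr rfl fun ω' _ => by simp only [h ω ω']
  simp only [H_eq_neg_sum, hdist]

theorem H_const [Fintype β] {μ : Ω → ℝ} (hμ : IsPMF μ) (c : β) : H μ (fun _ => c) = 0 := by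
  rw [H_eq_neg_sum]
  simp [dist, hμ.2]

theorem MI_eq_of_eq_iff [Fintype α] [Fintype β] [Fintype γ] {μ : Ω → ℝ} {X : Ω → α}
    {W : Ω → β} (Y : Ω → γ) (h : ∀ ω ω', X ω' = X ω ↔ W ω' = W ω) : MI μ X Y = MI μ W Y := by
  rw [MI, MI, H_eq_of_eq_iff h,
    H_eq_of_eq_iff (X := fun ω => (X ω, Y ω)) (W := fun ω => (W ω, Y ω))
      fun ω ω' => by simp only [Prod.ext_iff, h]]

theorem condH_eq_of_eq_iff [Fintype α] [Fintype β] [Fintype γ] {μ : Ω → ℝ} (X : Ω → α)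
    {Z : Ω → β} {W : Ω → γ} (h : ∀ ω ω', Z ω' = Z ω ↔ W ω' = W ω) :
    condH μ X Z = condH μ X W := by
  rw [condH, condH, H_eq_of_eq_iff h,
    H_eq_of_eq_iff (X := fun ω => (X ω, Z ω)) (W := fun ω => (X ω, W ω))
      fun ω ω' => by simp only [Prod.ext_iff, h]]

theorem sum_mul_logb_nonpos {μ : Ω → ℝ} (hμ : IsPMF μ) {r : Ω → ℝ}
    (hr : ∀ ω, 0 < μ ω → 0 < r ω) (hsum : ∑ ω, μ ω * r ω ≤ 1) :
    ∑ ω, μ ω * Real.logb 2 (r ω) ≤ 0 := by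
  have hlog2 : 0 < Real.log 2 := Real.log_pos one_lt_two
  have hterm : ∀ ω, μ ω * Real.logb 2 (r ω) ≤ (μ ω * r ω - μ ω) / Real.log 2 := by
    intro ω
    rcases (hμ.1 ω).eq_or_lt with h0 | h0
    · simp [← h0]
    rw [Real.logb, ← mul_div_assoc, div_le_div_iff_of_pos_right hlog2]
    nlinarith [Real.log_le_sub_one_of_pos (hr ω h0)]
  calc ∑ ω, μ ω * Real.logb 2 (r ω)
      ≤ ∑ ω, (μ ω * r ω - μ ω) / Real.log 2 := Finset.sum_le_sum fun ω _ => hterm ω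
    _ = ((∑ ω, μ ω * r ω) - 1) / Real.log 2 := by
      rw [← Finset.sum_div, Finset.sum_sub_distrib, hμ.2]
    _ ≤ 0 := div_nonpos_of_nonpos_of_nonneg (by linarith) hlog2.le

end Basic

section Information

variable {Ω α β γ : Type*} [Fintype Ω] [Fintype α] [Fintype β] [Fintype γ]

/-- Ratio of the conditionally independent coupling `p(x|z) p(y|z) p(z)` to `p(x,y,z)`. -/
def condIndepRatio (μ : Ω → ℝ) (X : Ω → α) (Y : Ω → β) (Z : Ω → γ) (ω : Ω) : ℝ :=
  dist μ (fun ω => (X ω, Z ω)) (X ω, Z ω) * dist μ (fun ω => (Y ω, Z ω)) (Y ω, Z ω)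
    / (dist μ (fun ω => (X ω, Y ω, Z ω)) (X ω, Y ω, Z ω) * dist μ Z (Z ω))

theorem sum_mul_condIndepRatio_le_one {μ : Ω → ℝ} (hμ : IsPMF μ) (X : Ω → α) (Y : Ω → β)
    (Z : Ω → γ) : ∑ ω, μ ω * condIndepRatio μ X Y Z ω ≤ 1 := by
  set pXZ := dist μ (fun ω => (X ω, Z ω))
  set pYZ := dist μ (fun ω => (Y ω, Z ω))
  set pXYZ := dist μ (fun ω => (X ω, Y ω, Z ω))
  set pZ := dist μ Z
  have hterm : ∀ w : α × β × γ, pXYZ w * (pXZ (w.1, w.2.2) * pYZ (w.2.1, w.2.2)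
      / (pXYZ w * pZ w.2.2)) ≤ pXZ (w.1, w.2.2) * pYZ (w.2.1, w.2.2) / pZ w.2.2 := by
    intro w
    rcases eq_or_ne (pXYZ w) 0 with h0 | h0
    · rw [h0, zero_mul]
      exact div_nonneg (mul_nonneg (dist_nonneg hμ _ _) (dist_nonneg hμ _ _)) (dist_nonneg hμ _ _)
    · rw [mul_div_assoc', mul_div_mul_left _ _ h0]
  -- Terms with `pZ z = 0` need no case split: they vanish by the convention `x / 0 = 0`.
  calc _ = ∑ w : α × β × γ, pXYZ w * (pXZ (w.1, w.2.2) * pYZ (w.2.1, w.2.2)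
          / (pXYZ w * pZ w.2.2)) :=
        (sum_dist_mul μ (fun ω => (X ω, Y ω, Z ω)) fun w =>
          pXZ (w.1, w.2.2) * pYZ (w.2.1, w.2.2) / (pXYZ w * pZ w.2.2)).symm
    _ ≤ ∑ w : α × β × γ, pXZ (w.1, w.2.2) * pYZ (w.2.1, w.2.2) / pZ w.2.2 :=
        Finset.sum_le_sum fun w _ => hterm w
    _ = ∑ z, (∑ x, pXZ (x, z)) * (∑ y, pYZ (y, z)) / pZ z := by
        simp only [Fintype.sum_prod_type, Finset.sum_mul_sum, Finset.sum_div]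
        exact (Finset.sum_congr rfl fun x _ => Finset.sum_comm).trans Finset.sum_comm
    _ = ∑ z, pZ z * pZ z / pZ z := by simp only [pXZ, pYZ, pZ, sum_dist_pair_fst]
    _ = 1 := by simp only [mul_self_div_self, pZ, sum_dist, hμ.2]

theorem condMI_eq_neg_sum_logb {μ : Ω → ℝ} (hμ : IsPMF μ) (X : Ω → α) (Y : Ω → β)
    (Z : Ω → γ) :
    condMI μ X Y Z = - ∑ ω, μ ω * Real.logb 2 (condIndepRatio μ X Y Z ω) := by
  have hterm : ∀ ω, μ ω * Real.logb 2 (condIndepRatio μ X Y Z ω)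
      = μ ω * Real.logb 2 (dist μ (fun ω => (X ω, Z ω)) (X ω, Z ω))
        + μ ω * Real.logb 2 (dist μ (fun ω => (Y ω, Z ω)) (Y ω, Z ω))
        - μ ω * Real.logb 2 (dist μ (fun ω => (X ω, Y ω, Z ω)) (X ω, Y ω, Z ω))
        - μ ω * Real.logb 2 (dist μ Z (Z ω)) := by
    intro ω
    rcases (hμ.1 ω).eq_or_lt with h0 | h0
    · simp [← h0]
    have hXZ := (dist_apply_self_pos hμ (fun ω => (X ω, Z ω)) h0).ne'
    have hYZ := (dist_apply_self_pos hμ (fun ω => (Y ω, Z ω)) h0).ne'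
    have hXYZ := (dist_apply_self_pos hμ (fun ω => (X ω, Y ω, Z ω)) h0).ne'
    have hZ := (dist_apply_self_pos hμ Z h0).ne'
    rw [condIndepRatio, Real.logb_div (mul_ne_zero hXZ hYZ) (mul_ne_zero hXYZ hZ),
      Real.logb_mul hXZ hYZ, Real.logb_mul hXYZ hZ]
    ring
  simp only [condMI, H_eq_neg_sum, hterm, Finset.sum_add_distrib, Finset.sum_sub_distrib]
  ring

theorem condMI_nonneg {μ : Ω → ℝ} (hμ : IsPMF μ) (X : Ω → α) (Y : Ω → β) (Z : Ω → γ) :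
    0 ≤ condMI μ X Y Z := by
  rw [condMI_eq_neg_sum_logb hμ, neg_nonneg]
  refine sum_mul_logb_nonpos hμ (fun ω h0 => ?_) (sum_mul_condIndepRatio_le_one hμ X Y Z)
  exact div_pos (mul_pos (dist_apply_self_pos hμ _ h0) (dist_apply_self_pos hμ _ h0))
    (mul_pos (dist_apply_self_pos hμ _ h0) (dist_apply_self_pos hμ _ h0))

theorem MI_nonneg {μ : Ω → ℝ} (hμ : IsPMF μ) (X : Ω → α) (Y : Ω → β) : 0 ≤ MI μ X Y := by
  have h := condMI_nonneg hμ X Y fun _ => ()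
  have hX : H μ (fun ω => (X ω, ())) = H μ X := H_eq_of_eq_iff fun _ _ => by simp
  have hY : H μ (fun ω => (Y ω, ())) = H μ Y := H_eq_of_eq_iff fun _ _ => by simp
  have hXY : H μ (fun ω => (X ω, Y ω, ())) = H μ (fun ω => (X ω, Y ω)) :=
    H_eq_of_eq_iff fun _ _ => by simp
  rwa [condMI, hX, hY, hXY, H_const hμ, sub_zero] at h

theorem MI_prod_eq_add_condMI (μ : Ω → ℝ) (X : Ω → α) (Y : Ω → β) (Z : Ω → γ) :
    MI μ (fun ω => (X ω, Z ω)) Y = MI μ Z Y + condMI μ X Y Z := by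
  have hZY : H μ (fun ω => (Z ω, Y ω)) = H μ (fun ω => (Y ω, Z ω)) :=
    H_eq_of_eq_iff fun _ _ => by simp only [Prod.ext_iff, and_comm]
  have hXZY : H μ (fun ω => ((X ω, Z ω), Y ω)) = H μ (fun ω => (X ω, Y ω, Z ω)) :=
    H_eq_of_eq_iff fun _ _ => by simp only [Prod.ext_iff]; tauto
  simp only [MI, condMI, hZY, hXZY]
  ring

theorem condMI_le_MI_prod {μ : Ω → ℝ} (hμ : IsPMF μ) (X : Ω → α) (Y : Ω → β) (Z : Ω → γ) :
    condMI μ X Y Z ≤ MI μ (fun ω => (X ω, Z ω)) Y := by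
  linarith [MI_prod_eq_add_condMI μ X Y Z, MI_nonneg hμ Z Y]

theorem MI_le_MI_prod {μ : Ω → ℝ} (hμ : IsPMF μ) (X : Ω → α) (Y : Ω → β) (Z : Ω → γ) :
    MI μ Z Y ≤ MI μ (fun ω => (X ω, Z ω)) Y := by
  linarith [MI_prod_eq_add_condMI μ X Y Z, condMI_nonneg hμ X Y Z]

theorem condH_sub_condH_prod (μ : Ω → ℝ) (X : Ω → α) (Y : Ω → β) (Z : Ω → γ) :
    condH μ X Z - condH μ X (fun ω => (Y ω, Z ω)) = condMI μ X Y Z := by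
  simp only [condH, condMI]
  ring

theorem condH_const_right {μ : Ω → ℝ} (hμ : IsPMF μ) (X : Ω → α) (c : β) :
    condH μ X (fun _ => c) = H μ X := by
  rw [condH, H_const hμ, sub_zero]
  exact H_eq_of_eq_iff fun _ _ => by simp

theorem condH_eq_zero_of_determined {μ : Ω → ℝ} {X : Ω → α} {Z : Ω → β}
    (h : ∀ ω ω', Z ω' = Z ω → X ω' = X ω) : condH μ X Z = 0 := by
  rw [condH, sub_eq_zero]
  exact H_eq_of_eq_iff fun ω ω' => by
    simp only [Prod.ext_iff]
    exact ⟨And.right, fun hZ => ⟨h ω ω' hZ, hZ⟩⟩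

end Information

section Prefix

/-- `maskPre x j = prefixMask x j`, but here the length `m` may also be `n`. -/
def prefixMask {α : Type*} {n : ℕ} (x : Fin n → α) (m : ℕ) : Fin n → Option α :=
  fun i => if (i : ℕ) < m then some (x i) else none

variable {α : Type*} {n : ℕ}

theorem prefixMask_zero (x : Fin n → α) : prefixMask x 0 = fun _ => none := by
  ext i; simp [prefixMask]

theorem prefixMask_length_eq_iff {x x' : Fin n → α} :
    prefixMask x' n = prefixMask x n ↔ x' = x := by
  simp [prefixMask, funext_iff]

theorem prefixMask_succ_eq_iff {x x' : Fin n → α} (j : Fin n) :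
    prefixMask x' (j + 1) = prefixMask x (j + 1) ↔
      x' j = x j ∧ prefixMask x' j = prefixMask x j := by
  simp only [prefixMask, funext_iff]
  constructor
  · intro h
    refine ⟨by simpa using h j, fun i => ?_⟩
    have := h i
    split_ifs at this ⊢ <;> first | rfl | omega
  · rintro ⟨hj, h⟩ i
    have := h i
    split_ifs at this ⊢ with h1 h2
    · exact this
    · rw [show i = j from Fin.ext (by omega), hj]
    all_goals rfl

end Prefix

section ChainRule

variable {Ω κ : Type*} {𝒳 𝒴 : Type} [Fintype Ω] [Fintype κ] [Fintype 𝒳] [Fintype 𝒴] {n : ℕ}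

theorem condH_prefixMask_sub_succ_le_MI {μ : Ω → ℝ} (hμ : IsPMF μ) (X : Ω → Fin n → 𝒳)
    (Y : Ω → Fin n → 𝒴) (K : Ω → κ) (j : Fin n) :
    condH μ K (fun ω => prefixMask (X ω) j) - condH μ K (fun ω => prefixMask (X ω) (j + 1))
      ≤ MI μ (fun ω => (K ω, maskPre (X ω) j, maskSuf (Y ω) j)) (fun ω => X ω j) := by
  have hsucc : condH μ K (fun ω => prefixMask (X ω) (j + 1))
      = condH μ K (fun ω => (X ω j, prefixMask (X ω) j)) :=
    condH_eq_of_eq_iff K fun ω ω' => by rw [prefixMask_succ_eq_iff, Prod.ext_iff]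
  have hrearrange : MI μ (fun ω => (maskSuf (Y ω) j, K ω, prefixMask (X ω) j)) (fun ω => X ω j)
      = MI μ (fun ω => (K ω, maskPre (X ω) j, maskSuf (Y ω) j)) (fun ω => X ω j) :=
    MI_eq_of_eq_iff _ fun ω ω' => by simp only [Prod.ext_iff]; tauto
  calc _ = condMI μ K (fun ω => X ω j) (fun ω => prefixMask (X ω) j) := by
        rw [hsucc, condH_sub_condH_prod]
    _ ≤ MI μ (fun ω => (K ω, prefixMask (X ω) j)) (fun ω => X ω j) := condMI_le_MI_prod hμ _ _ _
    _ ≤ MI μ (fun ω => (maskSuf (Y ω) j, K ω, prefixMask (X ω) j)) (fun ω => X ω j) :=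
        MI_le_MI_prod hμ _ _ _
    _ = _ := hrearrange

theorem H_le_sum_MI_prefix_suffix {μ : Ω → ℝ} (hμ : IsPMF μ) (X : Ω → Fin n → 𝒳)
    (Y : Ω → Fin n → 𝒴) (Φ : (Fin n → 𝒳) → κ) :
    H μ (fun ω => Φ (X ω)) ≤
      ∑ j, MI μ (fun ω => (Φ (X ω), maskPre (X ω) j, maskSuf (Y ω) j)) (fun ω => X ω j) := by
  set A : ℕ → ℝ := fun m => condH μ (fun ω => Φ (X ω)) fun ω => prefixMask (X ω) m
  have hA0 : A 0 = H μ (fun ω => Φ (X ω)) := by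
    simp only [A, prefixMask_zero]
    exact condH_const_right hμ _ _
  have hAn : A n = 0 := condH_eq_zero_of_determined fun ω ω' h => by
    rw [prefixMask_length_eq_iff.mp h]
  calc H μ (fun ω => Φ (X ω)) = ∑ j : Fin n, (A j - A (j + 1)) := by
        rw [Fin.sum_univ_eq_sum_range (fun m => A m - A (m + 1)), Finset.sum_range_sub', hA0,
          hAn, sub_zero]
    _ ≤ _ := Finset.sum_le_sum fun j _ => condH_prefixMask_sub_succ_le_MI hμ X Y _ j

end ChainRule

section UniformIndex

variable {σ α : Type*} [Fintype σ] {n : ℕ}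

theorem entPMF_uniformMix [Fintype α] (hn : 0 < n) (d : Fin n → α → ℝ)
    (hd : ∀ j, ∑ a, d j a = 1) :
    entPMF (fun aj : α × Fin n => 1 / n * d aj.2 aj.1)
      = Real.logb 2 n + 1 / n * ∑ j, entPMF (d j) := by
  have hn' : (n : ℝ) ≠ 0 := by positivity
  have hc : n * Real.negMulLog (1 / n) = Real.log n := by
    rw [Real.negMulLog, one_div, Real.log_inv]
    field_simp
  have hsum : ∑ aj : α × Fin n, Real.negMulLog (1 / n * d aj.2 aj.1)
      = Real.log n + 1 / n * ∑ j, ∑ a, Real.negMulLog (d j a) := by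
    simp only [Real.negMulLog_mul, Fintype.sum_prod_type_right, Finset.sum_add_distrib,
      ← Finset.sum_mul, ← Finset.mul_sum, hd, mul_one, Finset.sum_const, Finset.card_univ,
      Fintype.card_fin, nsmul_eq_mul, hc]
  simp only [entPMF_eq_sum_negMulLog, hsum, Real.logb, Finset.sum_div, add_div, mul_div_assoc]

theorem dist_uniformMix (p : σ → ℝ) (f : Fin n → σ → α) (a : α) (j : Fin n) :
    dist (fun js : Fin n × σ => 1 / n * p js.2) (fun js => (f js.1 js.2, js.1)) (a, j)
      = 1 / n * dist p (f j) a := by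
  simp only [dist, Fintype.sum_prod_type, Prod.ext_iff, Finset.mul_sum, mul_ite, mul_zero]
  rw [Finset.sum_eq_single j (fun j' _ hj' => by simp [hj']) (by simp)]
  simp

theorem H_uniformMix [Fintype α] (hn : 0 < n) {p : σ → ℝ} (hp : IsPMF p) (f : Fin n → σ → α) :
    H (fun js : Fin n × σ => 1 / n * p js.2) (fun js => (f js.1 js.2, js.1))
      = Real.logb 2 n + 1 / n * ∑ j, H p (f j) := by
  have hdist : dist (fun js : Fin n × σ => 1 / n * p js.2) (fun js => (f js.1 js.2, js.1))
      = fun aj => 1 / n * dist p (f aj.2) aj.1 := by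
    ext aj
    exact dist_uniformMix p f aj.1 aj.2
  rw [H, hdist, entPMF_uniformMix hn _ fun j => (isPMF_dist hp (f j)).2]
  rfl

end UniformIndex

section TimeSharing

variable {Ω σ α β : Type*} [Fintype Ω] [Fintype σ] [Fintype α] {n : ℕ}
  {μ : Ω → ℝ} (S : Ω → σ) (J : Ω → Fin n)

theorem H_pair_index_of_uniform (hn : 0 < n) (hμ : IsPMF μ)
    (hJ : ∀ j s, dist μ (fun ω => (J ω, S ω)) (j, s) = 1 / n * dist μ S s)
    (f : Fin n → σ → α) :
    H μ (fun ω => (f (J ω) (S ω), J ω))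
      = Real.logb 2 n + 1 / n * ∑ j, H μ (fun ω => f j (S ω)) := by
  have hJS : dist μ (fun ω => (J ω, S ω)) = fun js => 1 / n * dist μ S js.2 :=
    funext fun js => hJ js.1 js.2
  rw [H_comp μ (fun ω => (J ω, S ω)) fun js => (f js.1 js.2, js.1), hJS,
    H_uniformMix hn (isPMF_dist hμ S)]
  simp only [H_comp μ S]

theorem condMI_index_of_uniform [Fintype β] (hn : 0 < n) (hμ : IsPMF μ)
    (hJ : ∀ j s, dist μ (fun ω => (J ω, S ω)) (j, s) = 1 / n * dist μ S s)
    (f : Fin n → σ → α) (g : Fin n → σ → β) :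
    condMI μ (fun ω => f (J ω) (S ω)) (fun ω => g (J ω) (S ω)) J
      = 1 / n * ∑ j, MI μ (fun ω => f j (S ω)) (fun ω => g j (S ω)) := by
  have hXYZ : H μ (fun ω => (f (J ω) (S ω), g (J ω) (S ω), J ω))
      = H μ (fun ω => ((f (J ω) (S ω), g (J ω) (S ω)), J ω)) :=
    H_eq_of_eq_iff fun _ _ => by simp only [Prod.ext_iff]; tauto
  have hZ : H μ J = H μ (fun ω => ((), J ω)) := H_eq_of_eq_iff fun _ _ => by simp
  rw [condMI, hXYZ, hZ, H_pair_index_of_uniform S J hn hμ hJ f,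
    H_pair_index_of_uniform S J hn hμ hJ g,
    H_pair_index_of_uniform S J hn hμ hJ fun j s => (f j s, g j s),
    H_pair_index_of_uniform S J hn hμ hJ fun _ _ => ()]
  simp only [H_const hμ, MI, Finset.sum_add_distrib, Finset.sum_sub_distrib,
    Finset.sum_const_zero]
  ring

theorem sum_MI_le_mul_MI_of_uniform [Fintype β] (hμ : IsPMF μ)
    (hJ : ∀ j s, dist μ (fun ω => (J ω, S ω)) (j, s) = 1 / n * dist μ S s)
    (f : Fin n → σ → α) (g : Fin n → σ → β) :
    ∑ j, MI μ (fun ω => f j (S ω)) (fun ω => g j (S ω))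
      ≤ n * MI μ (fun ω => (f (J ω) (S ω), J ω)) (fun ω => g (J ω) (S ω)) := by
  rcases n.eq_zero_or_pos with rfl | hn
  · simp
  have h := condMI_le_MI_prod hμ (fun ω => f (J ω) (S ω)) (fun ω => g (J ω) (S ω)) J
  rwa [condMI_index_of_uniform S J hn hμ hJ f g, one_div, inv_mul_le_iff₀ (by positivity)] at h

end TimeSharing

/-- Single-letterization of the entropy of a function of the source: with
`K = Φ(X^n)`, `J` uniform on `{1,…,n}` independent of `(X^n, Y^n)`, and
`U = (K, X^{J−1}, Y_{J+1}^n, J)`, one has `H(K) ≤ n·I(U;X_J)`. -/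
theorem entropy_single_letterization
    {Ω 𝒳 𝒴 𝒦 : Type} [Fintype Ω] [Fintype 𝒳] [Fintype 𝒴] [Fintype 𝒦]
    (μ : Ω → ℝ) (hμ : IsPMF μ) {n : ℕ}
    (X : Ω → Fin n → 𝒳) (Y : Ω → Fin n → 𝒴) (Φ : (Fin n → 𝒳) → 𝒦)
    (J : Ω → Fin n)
    (hJ : ∀ (j : Fin n) (t : (Fin n → 𝒳) × (Fin n → 𝒴)),
      dist μ (fun ω => (J ω, X ω, Y ω)) (j, t)
        = (1 / (n : ℝ)) * dist μ (fun ω => (X ω, Y ω)) t) :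
    H μ (fun ω => Φ (X ω)) ≤
      (n : ℝ) * MI μ
        (fun ω => (Φ (X ω), maskPre (X ω) (J ω), maskSuf (Y ω) (J ω), J ω))
        (fun ω => X ω (J ω)) := by
  calc H μ (fun ω => Φ (X ω))
      ≤ ∑ j, MI μ (fun ω => (Φ (X ω), maskPre (X ω) j, maskSuf (Y ω) j)) (fun ω => X ω j) :=
        H_le_sum_MI_prefix_suffix hμ X Y Φ
    _ ≤ n * MI μ (fun ω => ((Φ (X ω), maskPre (X ω) (J ω), maskSuf (Y ω) (J ω)), J ω))
          (fun ω => X ω (J ω)) :=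
        sum_MI_le_mul_MI_of_uniform (fun ω => (X ω, Y ω)) J hμ hJ
          (fun j s => (Φ s.1, maskPre s.1 j, maskSuf s.2 j)) fun j s => s.1 j
    _ = _ := by
        rw [MI_eq_of_eq_iff
          (W := fun ω => (Φ (X ω), maskPre (X ω) (J ω), maskSuf (Y ω) (J ω), J ω)) _
          fun _ _ => by simp only [Prod.ext_iff]; tauto]

end CRGen
end
end
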